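/- arXiv:0710.3637 — 2 statements merged into one kernel-verified Lean document; each statement's English description precedes it below -/
import Mathlib

section
/- Let n ≥ 2 and let f be a C^∞ strictly convex function on a domain in ℝⁿ satisfying equation (1.3). Then for all indices i, j one has ρ · ∂²ρ/∂x_i∂x_j = (∂ρ/∂x_i)(∂ρ/∂x_j) at every point, and consequently Δρ = ((n+4)/2) ‖∇ρ‖²/ρ, where ‖·‖ and Δ are taken with respect to the Calabi metric of f. -/
/-!
By (1.3), `ρ = exp(-(Σ d_i x_i + d_0)/(n+2))` is the exponential of an affine function `ℓ`, so
`ρ_i = ℓ_i ρ` and `ρ_ij = ℓ_i ℓ_j ρ`, which gives `ρ ρ_ij = ρ_i ρ_j`. Substituting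
`ρ_ij = ρ_i ρ_j / ρ` into `Δρ`, both of its terms become multiples of `‖∇ρ‖²/ρ`, with
coefficients `1` and `(n+2)/2`.
-/

noncomputable section

/-- The `i`-th partial derivative of a function on `ℝⁿ`. -/
def pd {n : ℕ} (i : Fin n) (f : (Fin n → ℝ) → ℝ) : (Fin n → ℝ) → ℝ :=
  fun x => fderiv ℝ f x (Pi.single i 1)

/-- The Hessian matrix `(∂²f/∂x_i∂x_j)`. -/
def hess {n : ℕ} (f : (Fin n → ℝ) → ℝ) (x : Fin n → ℝ) : Matrix (Fin n) (Fin n) ℝ :=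
  Matrix.of fun i j => pd i (pd j f) x

/-- `ρ = (det(f_{ij}))^{−1/(n+2)}`. -/
def rhoF {n : ℕ} (f : (Fin n → ℝ) → ℝ) (x : Fin n → ℝ) : ℝ :=
  (hess f x).det ^ (-(1 : ℝ) / (n + 2))

/-- `⟨∇φ, ∇ψ⟩ = Σ f^{ij} φ_i ψ_j`, the Calabi-metric inner product of gradients. -/
def calInner {n : ℕ} (f φ ψ : (Fin n → ℝ) → ℝ) (x : Fin n → ℝ) : ℝ :=
  ∑ i : Fin n, ∑ j : Fin n, (hess f x)⁻¹ i j * pd i φ x * pd j ψ x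

/-- The Laplace–Beltrami operator of the Calabi metric `G = Σ f_{ij} dx_i dx_j`:
`Δφ = Σ f^{ij} ∂²φ/∂x_i∂x_j + ((n+2)/2)(1/ρ) Σ f^{ij} ρ_j φ_i`. -/
def calLap {n : ℕ} (f φ : (Fin n → ℝ) → ℝ) (x : Fin n → ℝ) : ℝ :=
  (∑ i : Fin n, ∑ j : Fin n, (hess f x)⁻¹ i j * pd i (pd j φ) x)
    + (((n : ℝ) + 2) / 2) * (1 / rhoF f x) *
        ∑ i : Fin n, ∑ j : Fin n, (hess f x)⁻¹ i j * pd j (rhoF f) x * pd i φ x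

open Real Set

section

variable {n : ℕ}

theorem pd_congr_of_eqOn {Ω : Set (Fin n → ℝ)} (hΩ : IsOpen Ω) {g h : (Fin n → ℝ) → ℝ}
    (hgh : EqOn g h Ω) (i : Fin n) : EqOn (pd i g) (pd i h) Ω := fun x hx => by
  simp only [pd, (Filter.eventuallyEq_of_mem (hΩ.mem_nhds hx) hgh).fderiv_eq]

theorem pd_const_mul_exp (L : (Fin n → ℝ) →L[ℝ] ℝ) (a c : ℝ) (j : Fin n) :
    pd j (fun z => a * exp (L z + c)) = fun z => a * L (Pi.single j 1) * exp (L z + c) := by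
  funext z
  have hderiv : HasFDerivAt (fun z => a * exp (L z + c)) (a • exp (L z + c) • L) z :=
    ((L.hasFDerivAt.add_const c).exp).const_mul a
  simp only [pd, hderiv.fderiv, smul_apply, smul_eq_mul]
  ring

theorem mul_pd_pd_eq_of_eqOn_exp {Ω : Set (Fin n → ℝ)} (hΩ : IsOpen Ω)
    {φ : (Fin n → ℝ) → ℝ} {L : (Fin n → ℝ) →L[ℝ] ℝ} {c : ℝ}
    (hφ : EqOn φ (fun z => exp (L z + c)) Ω) {x : Fin n → ℝ} (hx : x ∈ Ω) (i j : Fin n) :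
    φ x * pd i (pd j φ) x = pd i φ x * pd j φ x := by
  have hφ' : EqOn φ (fun z => 1 * exp (L z + c)) Ω := fun z hz => by simpa using hφ hz
  have hpd : ∀ k, EqOn (pd k φ) (fun z => L (Pi.single k 1) * exp (L z + c)) Ω := fun k z hz => by
    have hk := pd_congr_of_eqOn hΩ hφ' k hz
    rw [pd_const_mul_exp] at hk
    simpa using hk
  rw [hφ hx, hpd i hx, hpd j hx, pd_congr_of_eqOn hΩ (hpd j) i hx, pd_const_mul_exp]
  ring

theorem rhoF_eqOn_exp {Ω : Set (Fin n → ℝ)} {f : (Fin n → ℝ) → ℝ} {d : Fin n → ℝ}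
    {d0 : ℝ} (hpde : ∀ x ∈ Ω, (hess f x).det = exp ((∑ i : Fin n, d i * x i) + d0)) :
    ∃ (L : (Fin n → ℝ) →L[ℝ] ℝ) (c : ℝ), EqOn (rhoF f) (fun z => exp (L z + c)) Ω := by
  refine ⟨(-1 / (n + 2) : ℝ) • ∑ i, d i • ContinuousLinearMap.proj i, -1 / (n + 2) * d0,
    fun x hx => ?_⟩
  simp only [rhoF, hpde x hx, rpow_def_of_pos (exp_pos _), log_exp, smul_apply,
    sum_apply, ContinuousLinearMap.proj_apply, smul_eq_mul]
  congr 1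
  ring

theorem calLap_rhoF_eq_of_mul_pd_pd {f : (Fin n → ℝ) → ℝ} {x : Fin n → ℝ}
    (hρ : rhoF f x ≠ 0)
    (h : ∀ i j : Fin n, rhoF f x * pd i (pd j (rhoF f)) x = pd i (rhoF f) x * pd j (rhoF f) x) :
    calLap f (rhoF f) x = ((n + 4) / 2) * calInner f (rhoF f) (rhoF f) x / rhoF f x := by
  set S := calInner f (rhoF f) (rhoF f) x
  have hsecond : ∑ i : Fin n, ∑ j : Fin n, (hess f x)⁻¹ i j * pd i (pd j (rhoF f)) x
      = S / rhoF f x := by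
    simp only [S, calInner, Finset.sum_div]
    refine Finset.sum_congr rfl fun i _ => Finset.sum_congr rfl fun j _ => ?_
    rw [eq_div_iff hρ, mul_assoc, mul_comm _ (rhoF f x), h]
    ring
  have hdrift : ∑ i : Fin n, ∑ j : Fin n, (hess f x)⁻¹ i j * pd j (rhoF f) x * pd i (rhoF f) x
      = S := Finset.sum_congr rfl fun i _ => Finset.sum_congr rfl fun j _ => by ring
  rw [calLap, hsecond, hdrift]
  field_simp
  ring

end

theorem rho_hessian_identity_general (n : ℕ)
    (Ω : Set (Fin n → ℝ)) (hΩo : IsOpen Ω)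
    (f : (Fin n → ℝ) → ℝ)
    (d : Fin n → ℝ) (d0 : ℝ)
    (hpde : ∀ x ∈ Ω,
      (hess f x).det = Real.exp ((∑ i : Fin n, d i * x i) + d0)) :
    ∀ x ∈ Ω,
      (∀ i j : Fin n,
        rhoF f x * pd i (pd j (rhoF f)) x = pd i (rhoF f) x * pd j (rhoF f) x) ∧
      calLap f (rhoF f) x =
        (((n : ℝ) + 4) / 2) * calInner f (rhoF f) (rhoF f) x / rhoF f x := by
  intro x hx
  obtain ⟨L, c, hρ⟩ := rhoF_eqOn_exp hpde
  have hmul := mul_pd_pd_eq_of_eqOn_exp hΩo hρ hx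
  have hρ_ne : rhoF f x ≠ 0 := by
    rw [hρ hx]
    exact (exp_pos _).ne'
  exact ⟨hmul, calLap_rhoF_eq_of_mul_pd_pd hρ_ne hmul⟩

/-- For a smooth strictly convex solution of `det(f_{ij}) = exp(Σ d_i x_i + d_0)`,
one has `ρ·ρ_{ij} = ρ_i ρ_j` for all `i, j`, and consequently
`Δρ = ((n+4)/2)‖∇ρ‖²/ρ` with respect to the Calabi metric. -/
theorem rho_hessian_identity (n : ℕ) (hn : 2 ≤ n)
    (Ω : Set (Fin n → ℝ)) (hΩo : IsOpen Ω)
    (f : (Fin n → ℝ) → ℝ) (hf : ContDiffOn ℝ (⊤ : ℕ∞) f Ω)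
    (hconv : ∀ x ∈ Ω, (hess f x).PosDef)
    (d : Fin n → ℝ) (d0 : ℝ)
    (hpde : ∀ x ∈ Ω,
      (hess f x).det = Real.exp ((∑ i : Fin n, d i * x i) + d0)) :
    ∀ x ∈ Ω,
      (∀ i j : Fin n,
        rhoF f x * pd i (pd j (rhoF f)) x = pd i (rhoF f) x * pd j (rhoF f) x) ∧
      calLap f (rhoF f) x =
        (((n : ℝ) + 4) / 2) * calInner f (rhoF f) (rhoF f) x / rhoF f x :=
  rho_hessian_identity_general n Ω hΩo f d d0 hpde
end
end

section
/- (Remark 3) Let n ≥ 2 and define f : ℝⁿ → ℝ by f(x) = exp(x₁) + Σ_{i=2}^n x_i². Then f is smooth and strictly convex on ℝⁿ, satisfies det(∂²f/∂x_i∂x_j) = exp(x₁ + (n−1) log 2) on all of ℝⁿ (an instance of equation (1.3) with d₁ = 1, d₂ = … = d_n = 0, d₀ = (n−1) log 2), and f is not a polynomial. In particular, equation (1.3) admits non-quadratic smooth strictly convex solutions defined on all of ℝⁿ. -/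
/-!
Write `f(x) = Σᵢ gᵢ(xᵢ)` with `g₁ = exp` and `gᵢ(t) = t²` for `i ≥ 2`. The Hessian of such a
separable function is diagonal with entries `gᵢ''(xᵢ)`, here `exp x₁, 2, …, 2`, so positivity
and the determinant `2ⁿ⁻¹ exp x₁` are read off the diagonal. On the `x₁`-axis a polynomial
in `x` restricts to a one-variable polynomial, which cannot equal `exp` since `p(t)/eᵗ → 0`.
-/

noncomputable section

open Polynomial in
theorem MvPolynomial.exists_polynomial_eval_eq_eval_single {R σ : Type*} [CommSemiring R]
    [DecidableEq σ] (P : MvPolynomial σ R) (i : σ) :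
    ∃ q : R[X], ∀ t, q.eval t = MvPolynomial.eval (Pi.single i t) P := by
  let line : σ → R[X] := Pi.single i Polynomial.X
  refine ⟨MvPolynomial.eval₂ Polynomial.C line P, fun t => ?_⟩
  have hC : (Polynomial.evalRingHom t).comp Polynomial.C = RingHom.id R := by ext; simp
  have hline : (fun s => (line s).eval t) = Pi.single i t := by
    funext s
    rcases eq_or_ne s i with rfl | hs <;> simp [line, *]
  rw [MvPolynomial.polynomial_eval_eval₂, hC, hline, MvPolynomial.eval₂_id]

open Polynomial in
theorem Real.not_exists_polynomial_eval_eq_exp : ¬ ∃ q : ℝ[X], ∀ t, q.eval t = Real.exp t := by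
  rintro ⟨q, hq⟩
  have h := q.tendsto_div_exp_atTop
  simp only [hq, div_self (Real.exp_ne_zero _)] at h
  exact one_ne_zero (tendsto_nhds_unique tendsto_const_nhds h)

theorem Real.exp_add_natCast_mul_log {b : ℝ} (hb : 0 < b) (t : ℝ) (m : ℕ) :
    Real.exp (t + m * Real.log b) = Real.exp t * b ^ m := by
  rw [Real.exp_add, Real.exp_nat_mul, Real.exp_log hb]

section SeparableHessian

variable {n : ℕ}

theorem hasFDerivAt_comp_apply {h : ℝ → ℝ} {x : Fin n → ℝ} (j : Fin n)
    (hh : DifferentiableAt ℝ h (x j)) :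
    HasFDerivAt (fun y : Fin n → ℝ => h (y j))
      (deriv h (x j) • ContinuousLinearMap.proj (R := ℝ) (φ := fun _ : Fin n => ℝ) j) x :=
  hh.hasDerivAt.comp_hasFDerivAt x (hasFDerivAt_apply j x)

theorem pd_comp_apply {h : ℝ → ℝ} (hh : Differentiable ℝ h) (i j : Fin n) :
    pd i (fun y => h (y j)) = fun x => if i = j then deriv h (x j) else 0 := by
  ext x
  simp [pd, (hasFDerivAt_comp_apply j (hh (x j))).fderiv, Pi.single_apply, eq_comm]

theorem pd_sum_comp_apply {g : Fin n → ℝ → ℝ} (hg : ∀ i, Differentiable ℝ (g i)) (j : Fin n) :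
    pd j (fun y => ∑ i, g i (y i)) = fun x => deriv (g j) (x j) := by
  ext x
  have hF := HasFDerivAt.fun_sum (u := Finset.univ) fun i _ =>
    hasFDerivAt_comp_apply i (hg i (x i))
  simp [pd, hF.fderiv, Pi.single_apply]

theorem contDiff_sum_comp_apply {k : WithTop ℕ∞} {g : Fin n → ℝ → ℝ}
    (hg : ∀ i, ContDiff ℝ k (g i)) : ContDiff ℝ k fun y : Fin n → ℝ => ∑ i, g i (y i) :=
  ContDiff.sum fun i _ => (hg i).comp (contDiff_apply ℝ ℝ i)

theorem hess_sum_comp_apply {g : Fin n → ℝ → ℝ} (hg : ∀ i, ContDiff ℝ 2 (g i))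
    (x : Fin n → ℝ) :
    hess (fun y => ∑ i, g i (y i)) x = Matrix.diagonal fun i => deriv (deriv (g i)) (x i) := by
  ext i j
  simp only [hess, Matrix.of_apply, pd_sum_comp_apply fun i => (hg i).differentiable two_ne_zero,
    pd_comp_apply (hg j).differentiable_deriv_two]
  rcases eq_or_ne i j with rfl | hij <;> simp [*]

end SeparableHessian

def expSqSummand {n : ℕ} (a : Fin n) : Fin n → ℝ → ℝ :=
  Function.update (fun _ t => t ^ 2) a Real.exp

section ExpSq

variable {n : ℕ} (a : Fin n)

theorem sum_expSqSummand (x : Fin n → ℝ) :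
    ∑ i, expSqSummand a i (x i) =
      Real.exp (x a) + ∑ i ∈ Finset.univ.filter (· ≠ a), x i ^ 2 := by
  rw [Finset.filter_ne', ← Finset.add_sum_erase _ _ (Finset.mem_univ a)]
  congr 1
  · simp [expSqSummand]
  · refine Finset.sum_congr rfl fun i hi => ?_
    simp [expSqSummand, Finset.ne_of_mem_erase hi]

theorem contDiff_expSqSummand (i : Fin n) : ContDiff ℝ ⊤ (expSqSummand a i) := by
  rcases eq_or_ne i a with rfl | hi
  · simpa [expSqSummand] using Real.contDiff_exp
  · simpa [expSqSummand, hi] using contDiff_id.pow 2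

theorem hess_sum_expSqSummand (x : Fin n → ℝ) :
    hess (fun y => ∑ i, expSqSummand a i (y i)) x =
      Matrix.diagonal (Function.update (fun _ => 2) a (Real.exp (x a))) := by
  rw [hess_sum_comp_apply fun i => (contDiff_expSqSummand a i).of_le le_top]
  congr 1
  funext i
  rcases eq_or_ne i a with rfl | hi
  · simp [expSqSummand]
  · have hsq : deriv (fun t : ℝ => t ^ 2) = fun t => 2 * t := by ext; simp
    simp [expSqSummand, hi, hsq]

theorem det_hess_sum_expSqSummand (x : Fin n → ℝ) :
    (hess (fun y => ∑ i, expSqSummand a i (y i)) x).det = Real.exp (x a) * 2 ^ (n - 1) := by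
  rw [hess_sum_expSqSummand, Matrix.det_diagonal,
    Finset.prod_update_of_mem (Finset.mem_univ a)]
  simp [Finset.card_sdiff]

theorem expSqSummand_not_polynomial :
    ¬ ∃ P : MvPolynomial (Fin n) ℝ,
      ∀ x, ∑ i, expSqSummand a i (x i) = MvPolynomial.eval x P := by
  rintro ⟨P, hP⟩
  obtain ⟨q, hq⟩ := P.exists_polynomial_eval_eq_eval_single a
  refine Real.not_exists_polynomial_eval_eq_exp ⟨q, fun t => ?_⟩
  rw [hq, ← hP, sum_expSqSummand]
  simp [Pi.single_apply]

end ExpSq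

/-- Remark 3: `f(x) = exp(x₁) + Σ_{i=2}^n x_i²` is a smooth strictly convex
non-polynomial global solution of equation (1.3), with
`det D²f = exp(x₁ + (n−1)log 2)`. -/
theorem nonquadratic_global_solution (n : ℕ) (hn : 2 ≤ n)
    (f : (Fin n → ℝ) → ℝ)
    (hf : ∀ x : Fin n → ℝ,
      f x = Real.exp (x ⟨0, by omega⟩) +
        ∑ i ∈ Finset.univ.filter (fun i : Fin n => i ≠ ⟨0, by omega⟩), (x i) ^ 2) :
    ContDiff ℝ (⊤ : ℕ∞) f ∧
      (∀ x : Fin n → ℝ, (hess f x).PosDef) ∧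
      (∀ x : Fin n → ℝ,
        (hess f x).det =
          Real.exp (x ⟨0, by omega⟩ + ((n : ℝ) - 1) * Real.log 2)) ∧
      ¬ ∃ P : MvPolynomial (Fin n) ℝ, ∀ x : Fin n → ℝ, f x = MvPolynomial.eval x P := by
  set a : Fin n := ⟨0, by omega⟩
  obtain rfl : f = fun y => ∑ i, expSqSummand a i (y i) :=
    funext fun x => (hf x).trans (sum_expSqSummand a x).symm
  refine ⟨?_, fun x => ?_, fun x => ?_, expSqSummand_not_polynomial a⟩
  · exact contDiff_sum_comp_apply fun i => (contDiff_expSqSummand a i).of_le le_top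
  · rw [hess_sum_expSqSummand, Matrix.posDef_diagonal_iff]
    intro i
    rcases eq_or_ne i a with rfl | hi
    · simp [Real.exp_pos]
    · simp [hi]
  · rw [det_hess_sum_expSqSummand, ← Nat.cast_pred (by omega),
      Real.exp_add_natCast_mul_log two_pos]
end
end
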